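/- arXiv:1706.06285 — 4 statements merged into one kernel-verified Lean document; each statement's English description precedes it below -/
import Mathlib

section
/- Let z : ℝ≥0 → ℝ≥0 be a nonnegative integrable function and Z(s,t) = ∫_s^t z(h) dh. Let l₀,…,l_n be pairwise distinct reals and define H₀(s,t;l₀) = exp(−l₀ Z(s,t)) and H_m(s,t;l₀,…,l_m) = ∫_s^t exp(−l_m Z(u,t)) H_{m−1}(s,u;l₀,…,l_{m−1}) z(u) du for 1 ≤ m ≤ n. Then for all 0 ≤ s < t, H_m(s,t;l₀,…,l_m) = ∑_{i=0}^{m} αᵢ⁽ᵐ⁾(l₀,…,l_m) exp(−l_i Z(s,t)). -/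
open Finset MeasureTheory intervalIntegral

noncomputable def alphaCoef (l : ℕ → ℝ) : ℕ → ℕ → ℝ
  | 0, _ => 1
  | m + 1, i =>
    if i ≤ m then alphaCoef l m i / (l (m + 1) - l i)
    else -(∑ j ∈ Finset.range (m + 1), alphaCoef l m j / (l (m + 1) - l j))

/-- The iterated integral family of Lemma B.1:
`H₀(s,t;l₀) = exp(−l₀ Z(s,t))` with `Z(s,t) = ∫_s^t z`,
`H_m(s,t) = ∫_s^t exp(−l_m Z(u,t)) H_{m−1}(s,u) z(u) du`. -/
noncomputable def Hfun (z : ℝ → ℝ) (l : ℕ → ℝ) : ℕ → ℝ → ℝ → ℝ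
  | 0 => fun s t => Real.exp (-(l 0) * ∫ h in s..t, z h)
  | m + 1 => fun s t =>
      ∫ u in s..t, Real.exp (-(l (m + 1)) * ∫ h in u..t, z h) * Hfun z l m s u * z u


section Helpers
open Set
open scoped NNReal ENNReal

lemma exists_measurable_rep {z : ℝ → ℝ} (hz : ∀ u, 0 ≤ z u)
    (hzint : ∀ a b : ℝ, IntervalIntegrable z volume a b) :
    ∃ z' : ℝ → ℝ, Measurable z' ∧ (∀ u, 0 ≤ z' u) ∧ z' =ᵐ[volume] z := by
  have hcover : (⋃ n : ℕ, Ioc (-(n : ℝ)) n) = univ := by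
    ext x
    simp only [mem_iUnion, mem_univ, iff_true, Set.mem_Ioc]
    obtain ⟨n, hn⟩ := exists_nat_gt |x|
    have h1 := abs_lt.1 hn
    exact ⟨n, by linarith [h1.1], by linarith [h1.2]⟩
  have h1 : AEStronglyMeasurable z volume := by
    have : AEStronglyMeasurable z (volume.restrict (⋃ n : ℕ, Ioc (-(n : ℝ)) n)) := by
      rw [aestronglyMeasurable_iUnion_iff]
      intro n
      exact ((hzint (-(n : ℝ)) n).1).aestronglyMeasurable
    rwa [hcover, Measure.restrict_univ] at this
  refine ⟨fun u => max (h1.mk z u) 0, (h1.stronglyMeasurable_mk.measurable.max measurable_const),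
    fun u => le_max_right _ _, ?_⟩
  filter_upwards [h1.ae_eq_mk] with u hu
  rw [← hu, max_eq_left (hz u)]

lemma map_primitive_eq {z : ℝ → ℝ} (hz : ∀ u, 0 ≤ z u) (hmeas : Measurable z)
    (hzint : ∀ a b : ℝ, IntervalIntegrable z volume a b)
    (s t : ℝ) (hst : s ≤ t) :
    Measure.map (fun u => ∫ x in s..u, z x)
        ((volume.restrict (Ioc s t)).withDensity (fun u => ENNReal.ofReal (z u)))
      = volume.restrict (Ioc 0 (∫ x in s..t, z x)) := by
  set F : ℝ → ℝ := fun u => ∫ x in s..u, z x with hFdef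
  set ν : Measure ℝ :=
    (volume.restrict (Ioc s t)).withDensity (fun u => ENNReal.ofReal (z u)) with hν
  have hFcont : Continuous F := intervalIntegral.continuous_primitive hzint s
  have hFadd : ∀ a b : ℝ, F a + (∫ x in a..b, z x) = F b := fun a b =>
    integral_add_adjacent_intervals (hzint s a) (hzint a b)
  have hFmono : Monotone F := by
    intro a b hab
    have h1 := hFadd a b
    have h0 : 0 ≤ ∫ x in a..b, z x := intervalIntegral.integral_nonneg hab fun u _ => hz u
    linarith
  have hF0 : F s = 0 := intervalIntegral.integral_same
  have hFnonneg : ∀ u, s ≤ u → 0 ≤ F u := fun u hu => hF0 ▸ hFmono hu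
  set T : ℝ := F t with hTdef
  have hT : 0 ≤ T := hFnonneg t hst
  have hνinter : ∀ S : Set ℝ, MeasurableSet S → ν S = ν (S ∩ Ioc s t) := by
    intro S hS
    rw [hν, withDensity_apply _ hS, withDensity_apply _ (hS.inter measurableSet_Ioc),
      Measure.restrict_restrict hS, Measure.restrict_restrict (hS.inter measurableSet_Ioc),
      inter_assoc, inter_self]
  have hνIoc : ∀ a b : ℝ, s ≤ a → a ≤ b → b ≤ t → ν (Ioc a b) = ENNReal.ofReal (F b - F a) := by
    intro a b hsa hab hbt
    rw [hν, withDensity_apply _ measurableSet_Ioc, Measure.restrict_restrict measurableSet_Ioc,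
      inter_eq_left.2 (Ioc_subset_Ioc hsa hbt)]
    have hint : IntegrableOn z (Ioc a b) volume := (hzint a b).1
    rw [← ofReal_integral_eq_lintegral_ofReal hint
      (Filter.Eventually.of_forall fun u => hz u)]
    congr 1
    have h2 : (∫ x in Ioc a b, z x) = ∫ x in a..b, z x := (intervalIntegral.integral_of_le hab).symm
    rw [h2]
    linarith [hFadd a b]
  have hνfin : IsFiniteMeasure ν := by
    constructor
    rw [hν, withDensity_apply _ MeasurableSet.univ, Measure.restrict_restrict MeasurableSet.univ,
      univ_inter]
    exact ((hzint s t).1).lintegral_lt_top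
  have hIic : ∀ b : ℝ, ν (F ⁻¹' (Iic b)) = ENNReal.ofReal (min (max b 0) T) := by
    intro b
    have hSmeas : MeasurableSet (F ⁻¹' (Iic b)) := hFcont.measurable measurableSet_Iic
    rcases lt_or_ge b 0 with hb | hb
    · have hempty : F ⁻¹' (Iic b) ∩ Ioc s t = ∅ := by
        ext u
        simp only [mem_inter_iff, Set.mem_preimage, Set.mem_Iic, Set.mem_Ioc,
          mem_empty_iff_false, iff_false, not_and, and_imp]
        intro hFu hsu hut
        exact absurd (le_trans (hFnonneg u hsu.le) hFu) (not_le.2 hb)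
      rw [hνinter _ hSmeas, hempty, measure_empty, max_eq_right hb.le, min_eq_left hT]
      simp
    · rcases le_or_gt T b with hTb | hbT
      · have hfull : F ⁻¹' (Iic b) ∩ Ioc s t = Ioc s t := by
          rw [Set.inter_eq_right]
          intro u hu
          exact le_trans (hFmono hu.2) hTb
        rw [hνinter _ hSmeas, hfull, hνIoc s t le_rfl hst le_rfl, hF0, sub_zero,
          max_eq_left hb, min_eq_right hTb]
      · set A : Set ℝ := {u | u ∈ Icc s t ∧ F u ≤ b} with hA
        have hAne : A.Nonempty := ⟨s, ⟨le_rfl, hst⟩, by rw [hF0]; exact hb⟩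
        have hAbdd : BddAbove A := ⟨t, fun u hu => hu.1.2⟩
        have hAclosed : IsClosed A := by
          have h3 : A = Icc s t ∩ F ⁻¹' (Iic b) := rfl
          rw [h3]
          exact isClosed_Icc.inter (IsClosed.preimage hFcont isClosed_Iic)
        set c : ℝ := sSup A with hc
        have hcA : c ∈ A := hAclosed.csSup_mem hAne hAbdd
        have hcs : s ≤ c := hcA.1.1
        have hct : c ≤ t := hcA.1.2
        have hFcb : F c ≤ b := hcA.2
        have hclt : c < t := by
          rcases eq_or_lt_of_le hct with h | h
          · have : T ≤ b := by rw [hTdef, ← h]; exact hFcb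
            exact absurd this (not_le.2 hbT)
          · exact h
        have hFceq : F c = b := by
          by_contra hne
          have hlt : F c < b := lt_of_le_of_ne hFcb hne
          have hopen : IsOpen {u : ℝ | F u < b} := isOpen_lt hFcont continuous_const
          obtain ⟨δ, hδ, hball⟩ := Metric.isOpen_iff.1 hopen c hlt
          set u : ℝ := min (c + δ / 2) t with hu
          have hcu : c < u := lt_min (by linarith) hclt
          have huA : u ∈ A := by
            refine ⟨⟨le_trans hcs hcu.le, min_le_right _ _⟩, ?_⟩
            have hmemball : u ∈ Metric.ball c δ := by
              rw [Metric.mem_ball, Real.dist_eq, abs_lt]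
              have h4 : u ≤ c + δ / 2 := min_le_left _ _
              constructor <;> [linarith [hcu]; linarith]
            exact le_of_lt (hball hmemball)
          exact absurd (le_csSup hAbdd huA) (not_le.2 hcu)
        have hE : F ⁻¹' (Iic b) ∩ Ioc s t = Ioc s c := by
          ext u
          simp only [mem_inter_iff, Set.mem_preimage, Set.mem_Iic, Set.mem_Ioc]
          constructor
          · rintro ⟨hFu, hsu, hut⟩
            exact ⟨hsu, le_csSup hAbdd ⟨⟨hsu.le, hut⟩, hFu⟩⟩
          · rintro ⟨hsu, huc⟩
            exact ⟨le_trans (hFmono huc) (le_of_eq hFceq), hsu, le_trans huc hct⟩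
        rw [hνinter _ hSmeas, hE, hνIoc s c le_rfl hcs hct, hF0, sub_zero, hFceq,
          max_eq_left hb, min_eq_left hbT.le]
  haveI : IsFiniteMeasure (Measure.map F ν) := by
    constructor
    rw [Measure.map_apply hFcont.measurable MeasurableSet.univ, Set.preimage_univ]
    exact measure_lt_top ν univ
  refine Measure.ext_of_Iic _ _ fun b => ?_
  rw [Measure.map_apply hFcont.measurable measurableSet_Iic, hIic b,
    Measure.restrict_apply measurableSet_Iic]
  have hset : Iic b ∩ Ioc 0 T = Ioc 0 (min b T) := by
    ext x
    simp only [mem_inter_iff, Set.mem_Iic, Set.mem_Ioc, lt_min_iff, le_min_iff]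
    tauto
  rw [hset, Real.volume_Ioc, sub_zero]
  rcases le_or_gt 0 b with hb | hb
  · rw [max_eq_left hb]
  · rw [max_eq_right hb.le, min_eq_left hT, min_eq_left (le_trans hb.le hT),
      ENNReal.ofReal_of_nonpos hb.le]
    simp

lemma integral_comp_primitive {z : ℝ → ℝ} (hz : ∀ u, 0 ≤ z u) (hmeas : Measurable z)
    (hzint : ∀ a b : ℝ, IntervalIntegrable z volume a b)
    (s t : ℝ) (hst : s ≤ t) (g : ℝ → ℝ) (hg : Continuous g) :
    ∫ u in s..t, g (∫ x in s..u, z x) * z u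
      = ∫ y in (0:ℝ)..(∫ x in s..t, z x), g y := by
  set F : ℝ → ℝ := fun u => ∫ x in s..u, z x with hFdef
  set T : ℝ := F t with hTdef
  have hT : 0 ≤ T := intervalIntegral.integral_nonneg hst fun u _ => hz u
  have hmap := map_primitive_eq hz hmeas hzint s t hst
  have hFcont : Continuous F := intervalIntegral.continuous_primitive hzint s
  have h1 : (∫ y in (0:ℝ)..T, g y) = ∫ y, g y ∂(volume.restrict (Ioc 0 T)) :=
    intervalIntegral.integral_of_le hT
  rw [h1, ← hmap, integral_map hFcont.aemeasurable hg.aestronglyMeasurable]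
  have hdens : ((volume.restrict (Ioc s t)).withDensity (fun u => ENNReal.ofReal (z u)))
      = ((volume.restrict (Ioc s t)).withDensity
          (fun u => ((Real.toNNReal (z u) : NNReal) : ENNReal))) := rfl
  rw [hdens, integral_withDensity_eq_integral_smul (f := fun u => (z u).toNNReal)
    (by exact measurable_real_toNNReal.comp hmeas) (fun u => g (F u))]
  rw [intervalIntegral.integral_of_le hst]
  apply setIntegral_congr_fun measurableSet_Ioc
  intro u _
  simp only [NNReal.smul_def, Real.coe_toNNReal _ (hz u), smul_eq_mul]
  ring

lemma integral_exp_mul_primitive {z : ℝ → ℝ} (hz : ∀ u, 0 ≤ z u)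
    (hzint : ∀ a b : ℝ, IntervalIntegrable z volume a b)
    (s t : ℝ) (hst : s ≤ t) (c : ℝ) (hc : c ≠ 0) :
    ∫ u in s..t, Real.exp (c * ∫ x in s..u, z x) * z u
      = (Real.exp (c * ∫ x in s..t, z x) - 1) / c := by
  obtain ⟨z', hmeas', hz', hae⟩ := exists_measurable_rep hz hzint
  have hae' : z =ᵐ[volume] z' := hae.symm
  have hzint' : ∀ a b : ℝ, IntervalIntegrable z' volume a b := fun a b =>
    intervalIntegrable_iff.2 ((intervalIntegrable_iff.1 (hzint a b)).congr
      (ae_restrict_of_ae hae'))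
  have hZeq : ∀ a b : ℝ, (∫ x in a..b, z x) = ∫ x in a..b, z' x := fun a b =>
    intervalIntegral.integral_congr_ae (hae'.mono fun x hx _ => hx)
  have hL : (∫ u in s..t, Real.exp (c * ∫ x in s..u, z x) * z u)
      = ∫ u in s..t, Real.exp (c * ∫ x in s..u, z' x) * z' u := by
    apply intervalIntegral.integral_congr_ae
    filter_upwards [hae'] with u hu _
    rw [hZeq s u, hu]
  have hsub := integral_comp_primitive hz' hmeas' hzint' s t hst
    (fun y => Real.exp (c * y)) (Real.continuous_exp.comp (continuous_const.mul continuous_id))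
  rw [hL, hZeq s t, hsub]
  set T : ℝ := ∫ x in s..t, z' x with hT
  have hderiv : ∀ y ∈ uIcc (0:ℝ) T, HasDerivAt (fun y => Real.exp (c * y) / c)
      (Real.exp (c * y)) y := by
    intro y _
    have h1 : HasDerivAt (fun y : ℝ => c * y) c y := by
      simpa using (hasDerivAt_id y).const_mul c
    have h2 : HasDerivAt (fun y : ℝ => Real.exp (c * y)) (Real.exp (c * y) * c) y :=
      (Real.hasDerivAt_exp (c * y)).comp y h1
    have h3 := h2.div_const c
    rwa [mul_div_cancel_right₀ _ hc] at h3
  rw [intervalIntegral.integral_eq_sub_of_hasDerivAt hderiv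
    ((Real.continuous_exp.comp (continuous_const.mul continuous_id)).intervalIntegrable _ _)]
  rw [mul_zero, Real.exp_zero]
  ring

theorem Hfun_aux (z : ℝ → ℝ) (hz : ∀ u, 0 ≤ z u)
    (hzint : ∀ a b : ℝ, IntervalIntegrable z MeasureTheory.volume a b)
    (l : ℕ → ℝ) : ∀ m : ℕ,
    (∀ i j, i ≤ m → j ≤ m → i ≠ j → l i ≠ l j) →
    ∀ s t : ℝ, 0 ≤ s → s < t →
    Hfun z l m s t
      = ∑ i ∈ Finset.range (m + 1),
          alphaCoef l m i * Real.exp (-(l i) * ∫ h in s..t, z h) := by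
  intro m
  induction m with
  | zero =>
    intro _ s t _ _
    simp [Hfun, alphaCoef]
  | succ m ih =>
    intro hdist s t hs hst
    have hdist' : ∀ i j, i ≤ m → j ≤ m → i ≠ j → l i ≠ l j := fun i j hi hj =>
      hdist i j (hi.trans (Nat.le_succ m)) (hj.trans (Nat.le_succ m))
    have hc : ∀ i, i ≤ m → l (m + 1) - l i ≠ 0 := fun i hi =>
      sub_ne_zero.2 (hdist (m + 1) i le_rfl (hi.trans (Nat.le_succ m)) (by omega))
    set Zst : ℝ := ∫ h in s..t, z h with hZst
    have hZsplit : ∀ u : ℝ, (∫ h in u..t, z h) = Zst - ∫ h in s..u, z h := by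
      intro u
      have h1 := integral_add_adjacent_intervals (hzint s u) (hzint u t)
      rw [hZst]; linarith
    have hcongr : Hfun z l (m + 1) s t
        = ∫ u in s..t, ∑ i ∈ Finset.range (m + 1),
            (alphaCoef l m i * Real.exp (-(l (m + 1)) * Zst)) *
              (Real.exp ((l (m + 1) - l i) * ∫ x in s..u, z x) * z u) := by
      show (∫ u in s..t, Real.exp (-(l (m + 1)) * ∫ h in u..t, z h) * Hfun z l m s u * z u) = _
      apply intervalIntegral.integral_congr_ae
      apply Filter.Eventually.of_forall
      intro u hu
      rw [uIoc_of_le hst.le] at hu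
      obtain ⟨hsu, hut⟩ := hu
      rw [ih hdist' s u hs hsu, hZsplit u, Finset.mul_sum, Finset.sum_mul]
      refine Finset.sum_congr rfl fun i hi => ?_
      have h1 : Real.exp (-(l (m + 1)) * (Zst - ∫ x in s..u, z x))
            * Real.exp (-(l i) * ∫ x in s..u, z x)
          = Real.exp (-(l (m + 1)) * Zst)
            * Real.exp ((l (m + 1) - l i) * ∫ x in s..u, z x) := by
        rw [← Real.exp_add, ← Real.exp_add]
        congr 1
        ring
      linear_combination (alphaCoef l m i * z u) * h1
    have hInt : ∀ i ∈ Finset.range (m + 1), IntervalIntegrable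
        (fun u => (alphaCoef l m i * Real.exp (-(l (m + 1)) * Zst)) *
          (Real.exp ((l (m + 1) - l i) * ∫ x in s..u, z x) * z u)) volume s t := by
      intro i _
      apply IntervalIntegrable.const_mul
      have hcont : Continuous fun u => Real.exp ((l (m + 1) - l i) * ∫ x in s..u, z x) :=
        Real.continuous_exp.comp
          (continuous_const.mul (intervalIntegral.continuous_primitive hzint s))
      exact (hzint s t).continuousOn_mul hcont.continuousOn
    rw [hcongr, intervalIntegral.integral_finset_sum hInt]
    simp only [intervalIntegral.integral_const_mul]
    have hval : ∀ i ∈ Finset.range (m + 1),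
        (alphaCoef l m i * Real.exp (-(l (m + 1)) * Zst)) *
          (∫ u in s..t, Real.exp ((l (m + 1) - l i) * ∫ x in s..u, z x) * z u)
        = alphaCoef l m i / (l (m + 1) - l i) * Real.exp (-(l i) * Zst)
          - alphaCoef l m i / (l (m + 1) - l i) * Real.exp (-(l (m + 1)) * Zst) := by
      intro i hi
      rw [Finset.mem_range] at hi
      have hci := hc i (Nat.lt_succ_iff.1 hi)
      rw [integral_exp_mul_primitive hz hzint s t hst.le _ hci, ← hZst]
      have hexp : Real.exp (-(l i) * Zst)
          = Real.exp (-(l (m + 1)) * Zst) * Real.exp ((l (m + 1) - l i) * Zst) := by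
        rw [← Real.exp_add]
        congr 1
        ring
      rw [hexp]
      field_simp
    rw [Finset.sum_congr rfl hval, Finset.sum_sub_distrib, ← Finset.sum_mul]
    have hR1 : ∑ i ∈ Finset.range (m + 1), alphaCoef l (m + 1) i * Real.exp (-(l i) * Zst)
        = ∑ i ∈ Finset.range (m + 1),
            alphaCoef l m i / (l (m + 1) - l i) * Real.exp (-(l i) * Zst) :=
      Finset.sum_congr rfl fun i hi => by
        rw [Finset.mem_range] at hi
        simp only [alphaCoef, if_pos (Nat.lt_succ_iff.1 hi)]
    have hR2 : alphaCoef l (m + 1) (m + 1)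
        = -(∑ j ∈ Finset.range (m + 1), alphaCoef l m j / (l (m + 1) - l j)) := by
      simp only [alphaCoef, if_neg (Nat.not_succ_le_self m)]
    conv_rhs => rw [Finset.sum_range_succ, hR1, hR2]
    ring

end Helpers

/-- Lemma B.1: `H_m(s,t;l₀,…,l_m) = ∑_{i=0}^m αᵢ⁽ᵐ⁾ exp(−l_i Z(s,t))`. -/
theorem Hfun_eq_sum_alphaCoef (z : ℝ → ℝ) (hz : ∀ u, 0 ≤ z u)
    (hzint : ∀ a b : ℝ, IntervalIntegrable z MeasureTheory.volume a b)
    (l : ℕ → ℝ) (m : ℕ)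
    (hdist : ∀ i j, i ≤ m → j ≤ m → i ≠ j → l i ≠ l j)
    (s t : ℝ) (hs : 0 ≤ s) (hst : s < t) :
    Hfun z l m s t
      = ∑ i ∈ Finset.range (m + 1),
          alphaCoef l m i * Real.exp (-(l i) * ∫ h in s..t, z h) := by
  exact Hfun_aux z hz hzint l m hdist s t hs hst
end

section
/- With the notation of the iterated-integral lemma (z nonnegative, Z(s,t)=∫_s^t z, pairwise distinct l₀,…,l_{m+1}), the inductive step holds: ∫_s^t exp(−l_{m+1} Z(u,t)) · (∑_{i=0}^{m} αᵢ⁽ᵐ⁾ e^{−l_i Z(s,u)}) z(u) du = ∑_{i=0}^{m+1} αᵢ⁽ᵐ⁺¹⁾(l₀,…,l_{m+1}) e^{−l_i Z(s,t)}. -/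
open Finset MeasureTheory intervalIntegral

/-!
With `F(u) = Z(s,u)` one has `Z(u,t) = F(t) - F(u)`, so the `i`-th term of the integrand is
`e^{-l_{m+1} F(t)} e^{(l_{m+1} - l_i) F(u)} z(u)`. The primitive `F` is absolutely continuous with
`F' = z` almost everywhere, so the chain rule and the fundamental theorem of calculus for absolutely
continuous functions give `c ∫_s^t e^{c F(u)} z(u) du = e^{c F(t)} - 1`. Dividing by
`c = l_{m+1} - l_i ≠ 0` and summing, the terms regroup into the coefficients `αᵢ⁽ᵐ⁺¹⁾` by their
recursion.
-/

open Set Filter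

theorem LipschitzOnWith.comp_absolutelyContinuousOnInterval {X Y : Type*} [PseudoMetricSpace X]
    [PseudoMetricSpace Y] {g : X → Y} {f : ℝ → X} {K : NNReal} {s : Set X} {a b : ℝ}
    (hg : LipschitzOnWith K g s) (hf : AbsolutelyContinuousOnInterval f a b)
    (hfs : MapsTo f (uIcc a b) s) : AbsolutelyContinuousOnInterval (g ∘ f) a b := by
  unfold AbsolutelyContinuousOnInterval at hf ⊢
  refine squeeze_zero' (.of_forall fun _ ↦ Finset.sum_nonneg fun _ _ ↦ dist_nonneg) ?_
    (by simpa using hf.const_mul (K : ℝ))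
  rw [eventually_inf_principal]
  filter_upwards with E hE
  rw [Finset.mul_sum]
  gcongr with i hi
  exact hg.dist_le_mul _ (hfs (hE.1 i hi).1) _ (hfs (hE.1 i hi).2)

theorem ContDiff.comp_absolutelyContinuousOnInterval {g f : ℝ → ℝ} {a b : ℝ}
    (hg : ContDiff ℝ 1 g) (hf : AbsolutelyContinuousOnInterval f a b) :
    AbsolutelyContinuousOnInterval (g ∘ f) a b := by
  obtain ⟨C, hC⟩ := hf.exists_bound
  obtain ⟨K, hK⟩ := hg.contDiffOn.exists_lipschitzOnWith one_ne_zero (convex_Icc (-C) C)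
    isCompact_Icc
  exact hK.comp_absolutelyContinuousOnInterval hf fun x hx ↦ abs_le.mp (hC x hx)

theorem AbsolutelyContinuousOnInterval.integral_deriv_comp_mul_deriv {g f : ℝ → ℝ} {a b : ℝ}
    (hg : ContDiff ℝ 1 g) (hf : AbsolutelyContinuousOnInterval f a b) :
    ∫ x in a..b, deriv g (f x) * deriv f x = g (f b) - g (f a) := by
  refine (intervalIntegral.integral_congr_ae ?_).trans
    (hg.comp_absolutelyContinuousOnInterval hf).integral_deriv_eq_sub
  filter_upwards [hf.ae_differentiableAt] with x hx hxab
  exact (deriv_comp x (hg.differentiable one_ne_zero _) (hx (uIoc_subset_uIcc hxab))).symm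

theorem IntervalIntegrable.integral_deriv_comp_primitive_mul {g f : ℝ → ℝ} {a b : ℝ}
    (hg : ContDiff ℝ 1 g) (hf : IntervalIntegrable f volume a b) :
    ∫ x in a..b, deriv g (∫ v in a..x, f v) * f x = g (∫ v in a..b, f v) - g 0 := by
  have hchain := (hf.absolutelyContinuousOnInterval_intervalIntegral left_mem_uIcc
    ).integral_deriv_comp_mul_deriv hg
  rw [integral_same] at hchain
  refine (intervalIntegral.integral_congr_ae ?_).trans hchain
  filter_upwards [hf.ae_hasDerivAt_integral] with x hx hxab
  rw [(hx (uIoc_subset_uIcc hxab) a left_mem_uIcc).deriv]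

theorem IntervalIntegrable.mul_integral_exp_mul_primitive_mul {z : ℝ → ℝ} {a b : ℝ}
    (hz : IntervalIntegrable z volume a b) (c : ℝ) :
    c * ∫ u in a..b, Real.exp (c * ∫ v in a..u, z v) * z u
      = Real.exp (c * ∫ v in a..b, z v) - 1 := by
  have hderiv : deriv (fun y ↦ Real.exp (c * y)) = fun y ↦ c * Real.exp (c * y) := by
    ext y
    simpa [mul_comm] using ((hasDerivAt_mul_const c).exp).deriv
  have hchain := hz.integral_deriv_comp_primitive_mul (g := fun y ↦ Real.exp (c * y)) (by fun_prop)
  simp only [hderiv, mul_zero, Real.exp_zero, mul_assoc] at hchain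
  rw [← hchain, intervalIntegral.integral_const_mul]

theorem IntervalIntegrable.intervalIntegrable_exp_mul_exp_mul {z : ℝ → ℝ} {a b : ℝ}
    (hz : IntervalIntegrable z volume a b) (p q : ℝ) :
    IntervalIntegrable (fun u ↦ Real.exp (-p * ∫ v in u..b, z v)
      * Real.exp (-q * ∫ v in a..u, z v) * z u) volume a b := by
  have hzI : IntegrableOn z (uIcc a b) volume := (intervalIntegrable_iff').mp hz
  refine hz.continuousOn_mul (ContinuousOn.mul ?_ ?_)
  · exact Real.continuous_exp.comp_continuousOn
      (continuousOn_const.mul (continuousOn_primitive_interval_left hzI))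
  · exact Real.continuous_exp.comp_continuousOn
      (continuousOn_const.mul (continuousOn_primitive_interval hzI))

theorem IntervalIntegrable.integral_exp_mul_exp_mul {z : ℝ → ℝ} {a b : ℝ}
    (hz : IntervalIntegrable z volume a b) {p q : ℝ} (hpq : p ≠ q) :
    ∫ u in a..b, Real.exp (-p * ∫ v in u..b, z v) * Real.exp (-q * ∫ v in a..u, z v) * z u
      = (Real.exp (-q * ∫ v in a..b, z v) - Real.exp (-p * ∫ v in a..b, z v)) / (p - q) := by
  set F : ℝ → ℝ := fun u ↦ ∫ v in a..u, z v
  have hkernel : EqOn (fun u ↦ Real.exp (-p * ∫ v in u..b, z v) * Real.exp (-q * F u) * z u)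
      (fun u ↦ Real.exp (-p * F b) * (Real.exp ((p - q) * F u) * z u)) (uIcc a b) := by
    intro u hu
    dsimp only [F]
    rw [← integral_interval_sub_left hz (hz.mono_set (uIcc_subset_uIcc_left hu)),
      ← mul_assoc, ← Real.exp_add, ← Real.exp_add]
    ring_nf
  have hI : (p - q) * ∫ u in a..b, Real.exp ((p - q) * F u) * z u
      = Real.exp ((p - q) * F b) - 1 :=
    hz.mul_integral_exp_mul_primitive_mul (p - q)
  have hFb : Real.exp (-q * F b) = Real.exp (-p * F b) * Real.exp ((p - q) * F b) := by
    rw [← Real.exp_add]; ring_nf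
  rw [integral_congr hkernel, intervalIntegral.integral_const_mul, hFb, ← mul_sub_one, ← hI]
  field_simp [sub_ne_zero.mpr hpq]

theorem sum_alphaCoef_succ_mul (l : ℕ → ℝ) (m : ℕ) (x : ℕ → ℝ) :
    ∑ i ∈ range (m + 2), alphaCoef l (m + 1) i * x i
      = ∑ i ∈ range (m + 1), alphaCoef l m i / (l (m + 1) - l i) * (x i - x (m + 1)) := by
  rw [sum_range_succ, alphaCoef, if_neg (by omega), neg_mul, sum_mul, ← sub_eq_add_neg,
    ← sum_sub_distrib]
  refine sum_congr rfl fun i hi ↦ ?_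
  rw [alphaCoef, if_pos (by simpa [Nat.lt_succ_iff] using hi), mul_sub]

theorem alphaCoef_inductive_step_general (z : ℝ → ℝ)
    (hzint : ∀ a b : ℝ, IntervalIntegrable z MeasureTheory.volume a b)
    (l : ℕ → ℝ) (m : ℕ)
    (hdist : ∀ i j, i ≤ m + 1 → j ≤ m + 1 → i ≠ j → l i ≠ l j)
    (s t : ℝ) :
    (∫ u in s..t,
        Real.exp (-(l (m + 1)) * ∫ h in u..t, z h)
          * (∑ i ∈ Finset.range (m + 1),
              alphaCoef l m i * Real.exp (-(l i) * ∫ h in s..u, z h)) * z u)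
      = ∑ i ∈ Finset.range (m + 2),
          alphaCoef l (m + 1) i * Real.exp (-(l i) * ∫ h in s..t, z h) := by
  calc _ = ∫ u in s..t, ∑ i ∈ range (m + 1), alphaCoef l m i *
          (Real.exp (-l (m + 1) * ∫ h in u..t, z h)
            * Real.exp (-l i * ∫ h in s..u, z h) * z u) := by
        refine integral_congr fun u _ ↦ ?_
        rw [mul_sum, sum_mul]
        exact sum_congr rfl fun i _ ↦ by ring
    _ = ∑ i ∈ range (m + 1), alphaCoef l m i *
          ∫ u in s..t, Real.exp (-l (m + 1) * ∫ h in u..t, z h)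
            * Real.exp (-l i * ∫ h in s..u, z h) * z u := by
        rw [integral_finsetSum fun i _ ↦
          ((hzint s t).intervalIntegrable_exp_mul_exp_mul _ _).const_mul _]
        simp only [intervalIntegral.integral_const_mul]
    _ = _ := by
        rw [sum_alphaCoef_succ_mul]
        refine sum_congr rfl fun i hi ↦ ?_
        have hi : i < m + 1 := mem_range.mp hi
        rw [(hzint s t).integral_exp_mul_exp_mul (hdist _ _ le_rfl (by omega) (by omega))]
        ring

/-- The inductive step in the proof of Lemma B.1:
`∫_s^t e^{−l_{m+1} Z(u,t)} (∑_{i≤m} αᵢ⁽ᵐ⁾ e^{−l_i Z(s,u)}) z(u) du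
  = ∑_{i≤m+1} αᵢ⁽ᵐ⁺¹⁾ e^{−l_i Z(s,t)}`, where `Z(a,b) = ∫_a^b z`. -/
theorem alphaCoef_inductive_step (z : ℝ → ℝ) (hz : ∀ u, 0 ≤ z u)
    (hzint : ∀ a b : ℝ, IntervalIntegrable z MeasureTheory.volume a b)
    (l : ℕ → ℝ) (m : ℕ)
    (hdist : ∀ i j, i ≤ m + 1 → j ≤ m + 1 → i ≠ j → l i ≠ l j)
    (s t : ℝ) (hs : 0 ≤ s) (hst : s < t) :
    (∫ u in s..t,
        Real.exp (-(l (m + 1)) * ∫ h in u..t, z h)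
          * (∑ i ∈ Finset.range (m + 1),
              alphaCoef l m i * Real.exp (-(l i) * ∫ h in s..u, z h)) * z u)
      = ∑ i ∈ Finset.range (m + 2),
          alphaCoef l (m + 1) i * Real.exp (-(l i) * ∫ h in s..t, z h) :=
  alphaCoef_inductive_step_general z hzint l m hdist s t
end

section
/- Fix N ≥ 2, 𝔭, 𝔮 > 0, δ ∈ ℝ, and β₁,…,β_N ≥ 0. Arrange {1,…,N} in a cycle and take contagion rates ρ_{j,i} equal to 𝔭 if i is the clockwise neighbor of j, 𝔮 if i is the counterclockwise neighbor of j, and 0 otherwise. For a set of n consecutive cycle elements S(i) starting at 1+(i mod N), n < N, the sum over all orderings π of S(i) of the product 𝓛̂^π(n) = ∏_{k=0}^{n−1} 𝓛_{F_k^π}(π_{k+1}) (where 𝓛_E(i) = e^{−δ|E|} ∑_{j∈E} ρ_{j,i} for E ≠ ∅ and 𝓛_∅(i)=β_i, and F_k^π = {π₁,…,π_k}) equals e^{−δ n(n−1)/2} ∑_{j=0}^{n−1} β_{1+((i+j) mod N)} C(n−1,j) 𝔭^{n−1−j} 𝔮^{j}. -/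
open Finset

/-- Contagion rate `𝓛_E(i)`: `β_i` if no obligor has defaulted, and
`e^{−δ|E|} ∑_{j∈E} ρ_{j i}` if the set `E ≠ ∅` of obligors has defaulted. -/
noncomputable def contagionL {ι : Type*} [DecidableEq ι] (β : ι → ℝ) (δ : ℝ)
    (ρ : ι → ι → ℝ) (E : Finset ι) (i : ι) : ℝ :=
  if E = ∅ then β i else Real.exp (-δ * (E.card : ℝ)) * ∑ j ∈ E, ρ j i

/-- `𝓛̂^π(n) = ∏_{k=0}^{n−1} 𝓛_{F_k^π}(π_{k+1})`, the product of contagion factors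
along the default ordering `π` (given as a list), started from the defaulted set `E`. -/
noncomputable def contagionLhat {ι : Type*} [DecidableEq ι] (β : ι → ℝ) (δ : ℝ)
    (ρ : ι → ι → ℝ) : Finset ι → List ι → ℝ
  | _, [] => 1
  | E, i :: L => contagionL β δ ρ E i * contagionLhat β δ ρ (insert i E) L

/-- Near-neighbor contagion rates on the cycle `ZMod N`:
`𝔭` to the clockwise neighbor, `𝔮` to the counterclockwise neighbor, `0` otherwise. -/
noncomputable def nnRho {N : ℕ} (p q : ℝ) (j i : ZMod N) : ℝ :=
  if i = j + 1 then p else if i = j - 1 then q else 0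

/-! Only orderings along which the defaulted set stays a contiguous arc carry weight: the next
default must be a neighbour of the arc, entering at rate `𝔮` on the left or `𝔭` on the right,
and an arc of size `m` contributes the factor `e^{-δm}`. After the first default `a + j` (weight
`β (a + j)`), such orderings are lattice paths with `j` left and `n - 1 - j` right steps, each of
weight `e^{-δ(1 + ⋯ + (n-1))} 𝔭^{n-1-j} 𝔮^j`, and Pascal's rule on the endpoints of the arc
counts them as `C(n-1, j)`. -/

def orderings {α : Type*} (S : Finset α) : Finset (List α) :=
  ⟨Multiset.lists S.val, Multiset.lists_nodup_finset S⟩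

section Orderings

variable {α M : Type*} [AddCommMonoid M]

theorem mem_orderings {S : Finset α} {L : List α} : L ∈ orderings S ↔ S.val = L :=
  Multiset.mem_lists_iff _ _

theorem sum_permutations_toList (S : Finset α) (f : List α → M) :
    (S.toList.permutations.map f).sum = ∑ L ∈ orderings S, f L := by
  rw [Finset.sum, orderings]
  dsimp only
  rw [← S.coe_toList, Multiset.lists_coe, Multiset.map_coe, Multiset.sum_coe]

@[simp]
theorem orderings_empty : orderings (∅ : Finset α) = {[]} := by
  ext L
  simp [mem_orderings, eq_comm]

theorem sum_orderings_of_nonempty [DecidableEq α] {S : Finset α} (hS : S.Nonempty)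
    (f : List α → M) :
    ∑ L ∈ orderings S, f L = ∑ i ∈ S, ∑ T ∈ orderings (S.erase i), f (i :: T) := by
  rw [sum_sigma']
  symm
  refine sum_bij (fun x _ => x.1 :: x.2) ?_ ?_ ?_ (fun _ _ => rfl)
  · rintro ⟨i, T⟩ h
    simp only [mem_sigma, mem_orderings] at h ⊢
    rw [← Multiset.cons_coe, ← h.2, erase_val, Multiset.cons_erase h.1]
  · rintro ⟨i, T⟩ - ⟨j, U⟩ - h
    simp_all
  · rintro (_ | ⟨i, T⟩) hL <;> rw [mem_orderings] at hL
    · exact absurd (val_eq_zero.mp hL) hS.ne_empty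
    · have hi : i ∈ S := by simp [← mem_val, hL]
      refine ⟨⟨i, T⟩, ?_, rfl⟩
      simp [mem_orderings, hi, erase_val, hL]

end Orderings

section Contagion

variable {ι : Type*} [DecidableEq ι] (β : ι → ℝ) (δ : ℝ) (ρ : ι → ι → ℝ)

noncomputable def contagionLhatSum (A E : Finset ι) : ℝ :=
  ∑ L ∈ orderings (A \ E), contagionLhat β δ ρ E L

theorem contagionLhatSum_self (A : Finset ι) : contagionLhatSum β δ ρ A A = 1 := by
  simp [contagionLhatSum, contagionLhat]

theorem contagionLhatSum_eq_sum {A E : Finset ι} (h : (A \ E).Nonempty) :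
    contagionLhatSum β δ ρ A E
      = ∑ i ∈ A \ E, contagionL β δ ρ E i * contagionLhatSum β δ ρ A (insert i E) := by
  simp only [contagionLhatSum, sum_orderings_of_nonempty h, contagionLhat, mul_sum,
    sdiff_insert]

end Contagion

section Arc

variable {ι : Type*} (ρ : ι → ι → ℝ) (p q : ℝ) (e : ℕ → ι) (M : ℕ)

def IsNearNeighborAlong : Prop :=
  ∀ u < M, ∀ v < M, ρ (e v) (e u) = if u = v + 1 then p else if u + 1 = v then q else 0

variable {ρ p q e M}

theorem sum_rho_Ico (hρ : IsNearNeighborAlong ρ p q e M) {l r u : ℕ} (hlr : l < r)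
    (hrM : r ≤ M) (hu : u < M) (huI : u ∉ Ico l r) :
    ∑ v ∈ Ico l r, ρ (e v) (e u) = (if u + 1 = l then q else 0) + (if u = r then p else 0) := by
  rw [mem_Ico] at huI
  rw [sum_congr rfl fun v hv => hρ u hu v (by rw [mem_Ico] at hv; omega)]
  rcases (show u + 1 = l ∨ u = r ∨ (u + 1 ≠ l ∧ u ≠ r) by omega) with h | h | ⟨h₁, h₂⟩
  · rw [sum_eq_single_of_mem l (by simp; omega)
      (fun v hv hvl => by rw [mem_Ico] at hv; split_ifs <;> first | omega | simp)]
    split_ifs <;> first | omega | simp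
  · rw [sum_eq_single_of_mem (r - 1) (by simp; omega)
      (fun v hv hvl => by rw [mem_Ico] at hv; split_ifs <;> first | omega | simp)]
    split_ifs <;> first | omega | simp
  · rw [sum_eq_zero (fun v hv => by rw [mem_Ico] at hv; split_ifs <;> first | omega | simp)]
    simp [h₁, h₂]

variable [DecidableEq ι] (β : ι → ℝ) (δ : ℝ)

theorem contagionL_image_Ico (he : Set.InjOn e (range M))
    (hρ : IsNearNeighborAlong ρ p q e M) {l r u : ℕ} (hlr : l < r) (hrM : r ≤ M) (hu : u < M)
    (huI : u ∉ Ico l r) :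
    contagionL β δ ρ ((Ico l r).image e) (e u)
      = Real.exp (-δ * (r - l : ℕ)) *
          ((if u + 1 = l then q else 0) + (if u = r then p else 0)) := by
  have hinj : Set.InjOn e (Ico l r) :=
    he.mono (coe_subset.2 fun x hx => by simp at hx ⊢; omega)
  rw [contagionL, if_neg ((nonempty_Ico.2 hlr).image e).ne_empty,
    card_image_of_injOn hinj, Nat.card_Ico, sum_image hinj,
    sum_rho_Ico hρ hlr hrM hu huI]

theorem contagionLhatSum_image_Ico_rec (he : Set.InjOn e (range M))
    (hρ : IsNearNeighborAlong ρ p q e M) {l r : ℕ} (hlr : l < r) (hrM : r ≤ M)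
    (hne : 0 < l ∨ r < M) :
    contagionLhatSum β δ ρ ((range M).image e) ((Ico l r).image e)
      = Real.exp (-δ * (r - l : ℕ)) *
          ((if 0 < l then
              q * contagionLhatSum β δ ρ ((range M).image e) ((Ico (l - 1) r).image e)
            else 0) +
           (if r < M then
              p * contagionLhatSum β δ ρ ((range M).image e) ((Ico l (r + 1)).image e)
            else 0)) := by
  have hdiff : (range M).image e \ (Ico l r).image e = (range M \ Ico l r).image e :=
    (image_sdiff_of_injOn he fun x hx => by simp at hx ⊢; omega).symm
  have hD : (range M \ Ico l r).Nonempty := by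
    rcases hne with hl | hr
    · exact ⟨l - 1, by simp; omega⟩
    · exact ⟨r, by simp; omega⟩
  rw [contagionLhatSum_eq_sum _ _ _ (hdiff ▸ hD.image e), hdiff,
    sum_image (he.mono (coe_subset.2 sdiff_subset))]
  set G : ℕ → ℝ := fun u =>
    contagionLhatSum β δ ρ ((range M).image e) ((insert u (Ico l r)).image e)
  have hterm : ∀ u ∈ range M \ Ico l r,
      contagionL β δ ρ ((Ico l r).image e) (e u) *
          contagionLhatSum β δ ρ ((range M).image e) (insert (e u) ((Ico l r).image e))
        = Real.exp (-δ * (r - l : ℕ)) *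
            ((if u + 1 = l then q * G u else 0) + (if u = r then p * G u else 0)) := by
    intro u hu
    rw [mem_sdiff, mem_range] at hu
    rw [contagionL_image_Ico β δ he hρ hlr hrM hu.1 hu.2, ← image_insert]
    split_ifs <;> ring
  rw [sum_congr rfl hterm, ← mul_sum, sum_add_distrib]
  congr 2
  · rcases l with _ | l
    · simp
    · simp only [Nat.add_right_cancel_iff, sum_ite_eq', G]
      rw [if_pos (by simp; omega), if_pos l.succ_pos,
        show insert l (Ico (l + 1) r) = Ico (l + 1 - 1) r by ext; simp; omega]
  · simp only [sum_ite_eq', G]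
    rw [show insert r (Ico l r) = Ico l (r + 1) by ext; simp; omega]
    congr 1
    simp

theorem contagionLhatSum_image_Ico (he : Set.InjOn e (range M))
    (hρ : IsNearNeighborAlong ρ p q e M) {l r : ℕ} (hlr : l < r) (hrM : r ≤ M) :
    contagionLhatSum β δ ρ ((range M).image e) ((Ico l r).image e)
      = Real.exp (-δ * ∑ k ∈ Ico (r - l) M, (k : ℝ))
          * ((l + (M - r)).choose l : ℝ) * p ^ (M - r) * q ^ l := by
  induction hk : l + (M - r) generalizing l r with
  | zero =>
    obtain ⟨rfl, rfl⟩ : l = 0 ∧ r = M := by omega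
    simp [contagionLhatSum_self]
  | succ k ih =>
    rw [contagionLhatSum_image_Ico_rec β δ he hρ hlr hrM (by omega)]
    have hp : r < M → p ^ (M - r) = p * p ^ (M - (r + 1)) := fun hr => by
      rw [← pow_succ']; congr 1; omega
    have hq : 0 < l → q ^ l = q * q ^ (l - 1) := fun hl => by
      rw [← pow_succ', Nat.sub_add_cancel hl]
    rw [sum_eq_sum_Ico_succ_bot (show r - l < M by omega), mul_add (-δ), Real.exp_add]
    rcases Nat.eq_zero_or_pos l with rfl | hl <;> rcases hrM.lt_or_eq with hr | rfl
    · rw [if_neg (lt_irrefl 0), if_pos hr, ih (show 0 < r + 1 by omega) hr (by omega),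
        show r + 1 - 0 = r - 0 + 1 by omega, hp hr]
      simp only [Nat.choose_zero_right]
      ring
    · omega
    · rw [if_pos hl, if_pos hr, ih (show l - 1 < r by omega) hrM (by omega),
        ih (show l < r + 1 by omega) hr (by omega), show r - (l - 1) = r - l + 1 by omega,
        show r + 1 - l = r - l + 1 by omega, Nat.choose_succ_left k l hl, hp hr, hq hl]
      push_cast
      ring
    · rw [if_pos hl, if_neg (lt_irrefl r), ih (show l - 1 < r by omega) le_rfl (by omega),
        show r - (l - 1) = r - l + 1 by omega, show k = l - 1 by omega, Nat.sub_add_cancel hl,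
        Nat.choose_self, Nat.choose_self, hq hl]
      ring

end Arc

theorem add_natCast_eq_add_natCast_iff {N x y : ℕ} (a : ZMod N) (hx : x < N) (hy : y < N) :
    a + x = a + y ↔ x = y := by
  rw [add_right_inj, ZMod.natCast_eq_natCast_iff', Nat.mod_eq_of_lt hx, Nat.mod_eq_of_lt hy]

theorem isNearNeighborAlong_nnRho {N n : ℕ} (p q : ℝ) (a : ZMod N) (hnN : n < N) :
    IsNearNeighborAlong (nnRho p q) p q (fun k : ℕ => a + (k : ZMod N)) n := by
  intro u hu v hv
  have hfwd : a + (u : ZMod N) = a + v + 1 ↔ u = v + 1 := by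
    rw [add_assoc, ← Nat.cast_add_one, add_natCast_eq_add_natCast_iff a (by omega) (by omega)]
  have hbwd : a + (u : ZMod N) = a + v - 1 ↔ u + 1 = v := by
    rw [eq_sub_iff_add_eq, add_assoc, ← Nat.cast_add_one,
      add_natCast_eq_add_natCast_iff a (by omega) (by omega)]
  simp only [nnRho, hfwd, hbwd]

theorem near_neighbor_ordering_sum_general (N : ℕ)
    (p q δ : ℝ) (β : ZMod N → ℝ)
    (n : ℕ) (hn : 1 ≤ n) (hnN : n < N) (a : ZMod N) :
    ((((Finset.range n).image (fun k : ℕ => (a + (k : ZMod N)))).toList.permutations).map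
        (fun L => contagionLhat β δ (nnRho p q) ∅ L)).sum
      = Real.exp (-δ * ((n * (n - 1) / 2 : ℕ) : ℝ))
          * ∑ j ∈ Finset.range n,
              β (a + (j : ZMod N)) * ((n - 1).choose j : ℝ) * p ^ (n - 1 - j) * q ^ j := by
  set e : ℕ → ZMod N := fun k => a + k
  have he : Set.InjOn e (range n) := fun x hx y hy h =>
    (add_natCast_eq_add_natCast_iff a (by simp at hx; omega) (by simp at hy; omega)).1 h
  have hgauss : ∑ k ∈ Ico 1 n, (k : ℝ) = ((n * (n - 1) / 2 : ℕ) : ℝ) := by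
    rw [← sum_range_id, Nat.cast_sum, range_eq_Ico,
      sum_eq_sum_Ico_succ_bot hn]
    simp
  rw [sum_permutations_toList, ← sdiff_empty (s := (range n).image e)]
  change contagionLhatSum β δ (nnRho p q) _ ∅ = _
  rw [contagionLhatSum_eq_sum _ _ _ (by simp; omega), sdiff_empty,
    sum_image he, mul_sum]
  refine sum_congr rfl fun j hj => ?_
  rw [mem_range] at hj
  rw [show insert (e j) ∅ = (Ico j (j + 1)).image e by simp,
    contagionLhatSum_image_Ico β δ he (isNearNeighborAlong_nnRho p q a hnN) (Nat.lt_add_one j) hj,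
    Nat.add_sub_cancel_left, hgauss, show j + (n - (j + 1)) = n - 1 by omega,
    show n - (j + 1) = n - 1 - j by omega, contagionL, if_pos rfl]
  ring

/-- Key computation in Proposition 4.4: for a set `S(a)` of `n < N` consecutive obligors
on the cycle starting at `a`, summing `𝓛̂^π(n)` over all orderings `π` of `S(a)` gives
`e^{−δ n(n−1)/2} ∑_{j=0}^{n−1} β_{a+j} C(n−1,j) 𝔭^{n−1−j} 𝔮^j`. -/
theorem near_neighbor_ordering_sum (N : ℕ) [NeZero N] (hN : 2 ≤ N)
    (p q δ : ℝ) (hp : 0 < p) (hq : 0 < q) (β : ZMod N → ℝ) (hβ : ∀ i, 0 ≤ β i)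
    (n : ℕ) (hn : 1 ≤ n) (hnN : n < N) (a : ZMod N) :
    ((((Finset.range n).image (fun k : ℕ => (a + (k : ZMod N)))).toList.permutations).map
        (fun L => contagionLhat β δ (nnRho p q) ∅ L)).sum
      = Real.exp (-δ * ((n * (n - 1) / 2 : ℕ) : ℝ))
          * ∑ j ∈ Finset.range n,
              β (a + (j : ZMod N)) * ((n - 1).choose j : ℝ) * p ^ (n - 1 - j) * q ^ j :=
  near_neighbor_ordering_sum_general N p q δ β n hn hnN a
end

section
/- In the near neighbor contagion model on a cycle of N obligors, for 1 ≤ n < N one has ∑_{F: |F|=n, 𝓛̂^π(n)≠0 for some π} ∑_{π∈Π(F)} 𝓛̂^π(n) = ā₀ e^{−δ n(n−1)/2} (𝔭+𝔮)^{n−1}, where ā₀ = ∑_{i=1}^N β_i; moreover 𝓛̂^π(n) is nonzero only when F is a set of consecutive elements of the cycle. -/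
set_option linter.unusedSectionVars false

open Finset

namespace NNAux

/-! ## Generic permutation-sum machinery -/

variable {ι : Type*} [DecidableEq ι] [Inhabited ι]

/-- The finset of all linear orderings of `F`. -/
noncomputable def PermsOf (F : Finset ι) : Finset (List ι) := F.toList.permutations.toFinset

lemma mem_PermsOf {F : Finset ι} {L : List ι} : L ∈ PermsOf F ↔ L.Perm F.toList := by
  simp [PermsOf, List.mem_permutations]

lemma permsum_eq (F : Finset ι) (f : List ι → ℝ) :
    ((F.toList.permutations).map f).sum = ∑ L ∈ PermsOf F, f L := by
  rw [PermsOf, List.sum_toFinset f (List.nodup_permutations _ F.nodup_toList)]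

noncomputable def LhatSum (β : ι → ℝ) (δ : ℝ) (ρ : ι → ι → ℝ) (E F : Finset ι) : ℝ :=
  ∑ L ∈ PermsOf F, contagionLhat β δ ρ E L

lemma coe_of_mem_PermsOf {F : Finset ι} {L : List ι} (h : L ∈ PermsOf F) :
    (L : Multiset ι) = F.val := by
  rw [mem_PermsOf] at h
  rw [← Finset.coe_toList F, Multiset.coe_eq_coe]; exact h

lemma LhatSum_empty (β : ι → ℝ) (δ : ℝ) (ρ : ι → ι → ℝ) (E : Finset ι) :
    LhatSum β δ ρ E ∅ = 1 := by
  simp [LhatSum, PermsOf, contagionLhat]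

lemma cons_mem_PermsOf {F : Finset ι} {i : ι} {L' : List ι} :
    (i :: L') ∈ PermsOf F ↔ i ∈ F ∧ L' ∈ PermsOf (F.erase i) := by
  rw [mem_PermsOf, mem_PermsOf, ← Multiset.coe_eq_coe, ← Multiset.coe_eq_coe,
    Finset.coe_toList, Finset.coe_toList, Finset.erase_val]
  constructor
  · intro h
    have hi : i ∈ F := by
      rw [Finset.mem_def, ← h]; simp
    refine ⟨hi, ?_⟩
    have := congrArg (fun m : Multiset ι => m.erase i) h
    simpa using this
  · rintro ⟨hi, h⟩
    rw [← Multiset.cons_coe, h, Multiset.cons_erase (Finset.mem_def.mp hi)]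

lemma ne_nil_of_mem_PermsOf {F : Finset ι} {L : List ι} (hF : F.Nonempty)
    (hL : L ∈ PermsOf F) : L ≠ [] := by
  intro h; subst h
  have := coe_of_mem_PermsOf hL
  simp only [Multiset.coe_nil] at this
  exact hF.ne_empty (Finset.val_eq_zero.mp this.symm)

lemma LhatSum_rec (β : ι → ℝ) (δ : ℝ) (ρ : ι → ι → ℝ) (E : Finset ι) {F : Finset ι}
    (hF : F.Nonempty) :
    LhatSum β δ ρ E F = ∑ i ∈ F, contagionL β δ ρ E i * LhatSum β δ ρ (insert i E) (F.erase i) := by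
  have key : ∀ i ∈ F, contagionL β δ ρ E i * LhatSum β δ ρ (insert i E) (F.erase i)
      = ∑ L' ∈ PermsOf (F.erase i), contagionLhat β δ ρ E (i :: L') := by
    intro i _
    rw [LhatSum, Finset.mul_sum]
    exact Finset.sum_congr rfl fun L' _ => rfl
  rw [Finset.sum_congr rfl key,
    Finset.sum_sigma' F (fun i => PermsOf (F.erase i))
      (fun i L' => contagionLhat β δ ρ E (i :: L')), LhatSum]
  refine Finset.sum_bij' (fun L _ => (⟨L.headI, L.tail⟩ : (_ : ι) × List ι))
    (fun x _ => x.1 :: x.2) ?_ ?_ ?_ ?_ ?_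
  · intro L hL
    obtain ⟨a, t, rfl⟩ := List.exists_cons_of_ne_nil (ne_nil_of_mem_PermsOf hF hL)
    rw [cons_mem_PermsOf] at hL
    simpa [Finset.mem_sigma] using hL
  · rintro ⟨i, L'⟩ hx
    rw [Finset.mem_sigma] at hx
    exact cons_mem_PermsOf.mpr hx
  · intro L hL
    obtain ⟨a, t, rfl⟩ := List.exists_cons_of_ne_nil (ne_nil_of_mem_PermsOf hF hL)
    rfl
  · rintro ⟨i, L'⟩ _; rfl
  · intro L hL
    obtain ⟨a, t, rfl⟩ := List.exists_cons_of_ne_nil (ne_nil_of_mem_PermsOf hF hL)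
    rfl

/-- Exchange sum over `(F, i ∈ F)` with sum over `(i, F')`. -/
lemma exchange (s : Finset ι) (m : ℕ) (g : ι → Finset ι → ℝ) :
    ∑ F ∈ powersetCard (m + 1) s, ∑ i ∈ F, g i (F.erase i)
      = ∑ i ∈ s, ∑ F' ∈ powersetCard m (s.erase i), g i F' := by
  rw [Finset.sum_sigma' (powersetCard (m + 1) s) (fun F => F)
      (fun F i => g i (F.erase i)),
    Finset.sum_sigma' s (fun i => powersetCard m (s.erase i)) (fun i F' => g i F')]
  refine Finset.sum_bij' (fun x _ => (⟨x.2, x.1.erase x.2⟩ : (_ : ι) × Finset ι))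
    (fun y _ => (⟨insert y.1 y.2, y.1⟩ : (_ : Finset ι) × ι)) ?_ ?_ ?_ ?_ ?_
  · rintro ⟨F, i⟩ hx
    rw [Finset.mem_sigma, Finset.mem_powersetCard] at hx ⊢
    obtain ⟨⟨hFs, hcard⟩, hiF⟩ := hx
    exact ⟨hFs hiF, Finset.erase_subset_erase i hFs,
      by simp [Finset.card_erase_of_mem hiF, hcard]⟩
  · rintro ⟨i, F'⟩ hy
    rw [Finset.mem_sigma, Finset.mem_powersetCard] at hy ⊢
    obtain ⟨his, hF's, hcard⟩ := hy
    have hnotmem : i ∉ F' := fun h => Finset.notMem_erase i s (hF's h)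
    refine ⟨⟨?_, ?_⟩, Finset.mem_insert_self i F'⟩
    · exact Finset.insert_subset his (hF's.trans (Finset.erase_subset i s))
    · rw [Finset.card_insert_of_notMem hnotmem, hcard]
  · rintro ⟨F, i⟩ hx
    rw [Finset.mem_sigma] at hx
    have : insert i (F.erase i) = F := Finset.insert_erase hx.2
    simp only [this]
  · rintro ⟨i, F'⟩ hy
    rw [Finset.mem_sigma, Finset.mem_powersetCard] at hy
    have hnotmem : i ∉ F' := fun h => Finset.notMem_erase i s (hy.2.1 h)
    simp only [Finset.erase_insert hnotmem]
  · rintro ⟨F, i⟩ _; rfl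

section Cycle

variable {N : ℕ} [NeZero N]

/-- The arc `{a, a+1, …, a+k-1}` in the cycle `ZMod N`. -/
def arc (a : ZMod N) (k : ℕ) : Finset (ZMod N) :=
  (Finset.range k).image (fun j : ℕ => a + (j : ZMod N))

lemma mem_arc {a x : ZMod N} {k : ℕ} : x ∈ arc a k ↔ ∃ j, j < k ∧ x = a + (j : ZMod N) := by
  simp [arc, eq_comm]

lemma Npos : 0 < N := Nat.pos_of_ne_zero (NeZero.ne N)

lemma cast_inj_of_lt {j k : ℕ} (hj : j < N) (hk : k < N)
    (h : (j : ZMod N) = (k : ZMod N)) : j = k := by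
  have := congrArg ZMod.val h
  rwa [ZMod.val_cast_of_lt hj, ZMod.val_cast_of_lt hk] at this

lemma cast_ne_zero {m : ℕ} (h0 : 0 < m) (h : m < N) : (m : ZMod N) ≠ 0 := by
  intro hc
  have hd := (ZMod.natCast_eq_zero_iff m N).mp hc
  have := Nat.le_of_dvd h0 hd
  omega

lemma arc_nonempty (a : ZMod N) {k : ℕ} (hk : 1 ≤ k) : (arc a k).Nonempty :=
  ⟨a, mem_arc.mpr ⟨0, hk, by simp⟩⟩

lemma card_arc (a : ZMod N) {k : ℕ} (hk : k ≤ N) : (arc a k).card = k := by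
  rw [arc, Finset.card_image_of_injOn, Finset.card_range]
  intro j1 h1 j2 h2 h
  simp only [Finset.coe_range, Set.mem_Iio] at h1 h2
  exact cast_inj_of_lt (lt_of_lt_of_le h1 hk) (lt_of_lt_of_le h2 hk) (by exact add_left_cancel h)

lemma add_cast_notMem (a : ZMod N) {k m : ℕ} (hk : k ≤ m) (hm : m < N) :
    a + (m : ZMod N) ∉ arc a k := by
  rw [mem_arc]
  rintro ⟨j, hj, hx⟩
  have : (m : ZMod N) = (j : ZMod N) := by
    have := hx; exact add_left_cancel this
  have := cast_inj_of_lt hm (by omega) this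
  omega

lemma sub_cast_notMem (a : ZMod N) {k m : ℕ} (hm : 1 ≤ m) (hkm : k + m ≤ N) :
    a - (m : ZMod N) ∉ arc a k := by
  rw [mem_arc]
  rintro ⟨j, hj, hx⟩
  have hz : ((j + m : ℕ) : ZMod N) = 0 := by
    push_cast
    linear_combination -hx
  exact cast_ne_zero (by omega) (by omega) hz

lemma arc_succ_right (a : ZMod N) (k : ℕ) :
    arc a (k + 1) = insert (a + (k : ZMod N)) (arc a k) := by
  rw [arc, Finset.range_add_one, Finset.image_insert]; rfl

lemma arc_succ_left (a : ZMod N) (k : ℕ) :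
    arc (a - 1) (k + 1) = insert (a - 1) (arc a k) := by
  ext x
  rw [Finset.mem_insert, mem_arc, mem_arc]
  constructor
  · rintro ⟨j, hj, rfl⟩
    match j with
    | 0 => left; simp
    | j' + 1 => right; exact ⟨j', by omega, by push_cast; ring⟩
  · rintro (rfl | ⟨j, hj, rfl⟩)
    · exact ⟨0, by omega, by simp⟩
    · exact ⟨j + 1, by omega, by push_cast; ring⟩

lemma sub_one_mem_iff {a i : ZMod N} {k : ℕ} (h1k : 1 ≤ k) (hi : i ∉ arc a k) :
    i - 1 ∈ arc a k ↔ i = a + (k : ZMod N) := by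
  constructor
  · rw [mem_arc]
    rintro ⟨j, hj, hx⟩
    have hij : i = a + ((j + 1 : ℕ) : ZMod N) := by
      push_cast
      linear_combination hx
    rcases Nat.lt_or_ge (j + 1) k with h | h
    · exact absurd (mem_arc.mpr ⟨j + 1, h, hij⟩) hi
    · have : j + 1 = k := by omega
      rw [← this]; exact hij
  · rintro rfl
    rw [mem_arc]
    refine ⟨k - 1, by omega, ?_⟩
    have : ((k - 1 : ℕ) : ZMod N) = (k : ZMod N) - 1 := by
      push_cast [Nat.cast_sub h1k]; ring
    rw [this]; ring

lemma add_one_mem_iff {a i : ZMod N} {k : ℕ} (h1k : 1 ≤ k) (hi : i ∉ arc a k) :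
    i + 1 ∈ arc a k ↔ i = a - 1 := by
  constructor
  · rw [mem_arc]
    rintro ⟨j, hj, hx⟩
    match j with
    | 0 => simp only [Nat.cast_zero, add_zero] at hx; linear_combination hx
    | j' + 1 =>
      exfalso
      refine hi (mem_arc.mpr ⟨j', by omega, ?_⟩)
      push_cast at hx
      linear_combination hx
  · rintro rfl
    rw [mem_arc]
    exact ⟨0, by omega, by simp⟩

lemma sub_ne_add {i : ZMod N} (hN3 : 3 ≤ N) : i - 1 ≠ i + 1 := by
  intro h
  have : ((2 : ℕ) : ZMod N) = 0 := by push_cast; linear_combination -h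
  exact cast_ne_zero (by omega) (by omega) this

lemma sum_nnRho (p q : ℝ) (E : Finset (ZMod N)) (i : ZMod N) (hN3 : 3 ≤ N) :
    ∑ j ∈ E, nnRho p q j i
      = (if i - 1 ∈ E then p else 0) + (if i + 1 ∈ E then q else 0) := by
  have h2 : i - 1 ≠ i + 1 := sub_ne_add hN3
  have hpt : ∀ j ∈ E, nnRho p q j i
      = (if j = i - 1 then p else 0) + (if j = i + 1 then q else 0) := by
    intro j _
    unfold nnRho
    by_cases h1 : j = i - 1
    · subst h1
      rw [if_pos (by ring), if_pos rfl, if_neg (by intro h; exact h2 h)]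
      ring
    · by_cases hr : j = i + 1
      · subst hr
        rw [if_neg, if_pos (by ring), if_neg h1, if_pos rfl]
        · ring
        · intro h
          exact h2 (by linear_combination h)
      · rw [if_neg, if_neg, if_neg h1, if_neg hr]
        · ring
        · intro h; exact hr (by linear_combination -h)
        · intro h; exact h1 (by linear_combination -h)
  rw [Finset.sum_congr rfl hpt, Finset.sum_add_distrib]
  congr 1 <;> simp [Finset.sum_ite_eq']

lemma contagionL_arc (β : ZMod N → ℝ) (δ p q : ℝ) (a : ZMod N) {k : ℕ}
    (h1k : 1 ≤ k) (hkN : k + 2 ≤ N) {i : ZMod N} (hi : i ∉ arc a k) :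
    contagionL β δ (nnRho p q) (arc a k) i
      = Real.exp (-δ * (k : ℝ)) *
        (if i = a + (k : ZMod N) then p else if i = a - 1 then q else 0) := by
  have hne : arc a k ≠ ∅ := (arc_nonempty a h1k).ne_empty
  rw [contagionL, if_neg hne, card_arc a (by omega),
    sum_nnRho p q _ i (by omega)]
  congr 1
  by_cases hR : i = a + (k : ZMod N)
  · rw [if_pos hR, if_pos ((sub_one_mem_iff h1k hi).mpr hR), if_neg, add_zero]
    rw [hR]
    intro hmem
    have : a + (k : ZMod N) + 1 = a + ((k + 1 : ℕ) : ZMod N) := by push_cast; ring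
    rw [this] at hmem
    exact add_cast_notMem a (by omega) (by omega) hmem
  · rw [if_neg hR, if_neg (fun h => hR ((sub_one_mem_iff h1k hi).mp h))]
    by_cases hL : i = a - 1
    · rw [if_pos hL, if_pos ((add_one_mem_iff h1k hi).mpr hL), zero_add]
    · rw [if_neg hL, if_neg (fun h => hL ((add_one_mem_iff h1k hi).mp h)), add_zero]

lemma compl_erase_insert (E : Finset (ZMod N)) (i : ZMod N) :
    Eᶜ.erase i = (insert i E)ᶜ := by
  ext x; simp [not_or]

lemma sumA (β : ZMod N → ℝ) (δ p q : ℝ) :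
    ∀ (m : ℕ) (a : ZMod N) (k : ℕ), 1 ≤ k → k + m ≤ N - 1 →
    ∑ F ∈ powersetCard m ((arc a k)ᶜ), LhatSum β δ (nnRho p q) (arc a k) F
      = Real.exp (-δ * ((∑ j ∈ Finset.range m, (k + j) : ℕ) : ℝ)) * (p + q) ^ m := by
  haveI : Inhabited (ZMod N) := ⟨0⟩
  intro m
  induction m with
  | zero =>
    intro a k _ _
    simp [LhatSum_empty]
  | succ m ih =>
    intro a k h1k hkm
    have hN1 : 0 < N := Npos
    have step1 : ∀ F ∈ powersetCard (m+1) ((arc a k)ᶜ),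
        LhatSum β δ (nnRho p q) (arc a k) F
          = ∑ i ∈ F, contagionL β δ (nnRho p q) (arc a k) i *
              LhatSum β δ (nnRho p q) (insert i (arc a k)) (F.erase i) := by
      intro F hF
      exact LhatSum_rec _ _ _ _ (Finset.card_pos.mp (by
        rw [(Finset.mem_powersetCard.mp hF).2]; omega))
    rw [Finset.sum_congr rfl step1,
      exchange ((arc a k)ᶜ) m (fun i F' => contagionL β δ (nnRho p q) (arc a k) i *
        LhatSum β δ (nnRho p q) (insert i (arc a k)) F')]
    have step2 : ∀ i ∈ (arc a k)ᶜ, (∑ F' ∈ powersetCard m ((arc a k)ᶜ.erase i),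
        contagionL β δ (nnRho p q) (arc a k) i *
          LhatSum β δ (nnRho p q) (insert i (arc a k)) F')
        = contagionL β δ (nnRho p q) (arc a k) i *
          ∑ F' ∈ powersetCard m ((arc a k)ᶜ.erase i),
            LhatSum β δ (nnRho p q) (insert i (arc a k)) F' :=
      fun i _ => (Finset.mul_sum _ _ _).symm
    rw [Finset.sum_congr rfl step2]
    have hRmem : a + (k : ZMod N) ∈ (arc a k)ᶜ :=
      Finset.mem_compl.mpr (add_cast_notMem a le_rfl (by omega))
    have hLmem : a - 1 ∈ (arc a k)ᶜ := Finset.mem_compl.mpr (by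
      have := sub_cast_notMem a (k := k) (m := 1) le_rfl (by omega)
      simpa using this)
    have hRL : a + (k : ZMod N) ≠ a - 1 := by
      intro h
      have : ((k + 1 : ℕ) : ZMod N) = 0 := by push_cast; linear_combination h
      exact cast_ne_zero (by omega) (by omega) this
    have hz : ∀ i ∈ (arc a k)ᶜ, i ≠ a + (k : ZMod N) ∧ i ≠ a - 1 →
        contagionL β δ (nnRho p q) (arc a k) i *
          (∑ F' ∈ powersetCard m ((arc a k)ᶜ.erase i),
            LhatSum β δ (nnRho p q) (insert i (arc a k)) F') = 0 := by
      intro i hi hni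
      rw [contagionL_arc β δ p q a h1k (by omega) (Finset.mem_compl.mp hi)]
      rw [if_neg hni.1, if_neg hni.2, mul_zero, zero_mul]
    rw [Finset.sum_eq_add_of_mem _ _ hRmem hLmem hRL hz]
    have hiR : insert (a + (k : ZMod N)) (arc a k) = arc a (k+1) := (arc_succ_right a k).symm
    have hiL : insert (a - 1) (arc a k) = arc (a-1) (k+1) := (arc_succ_left a k).symm
    rw [contagionL_arc β δ p q a h1k (by omega) (Finset.mem_compl.mp hRmem),
      contagionL_arc β δ p q a h1k (by omega) (Finset.mem_compl.mp hLmem),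
      if_pos rfl, if_neg (fun h => hRL h.symm), if_pos rfl,
      compl_erase_insert, compl_erase_insert, hiR, hiL,
      ih a (k+1) (by omega) (by omega), ih (a-1) (k+1) (by omega) (by omega)]
    have hS : (∑ j ∈ Finset.range (m+1), (k + j)) = k + ∑ j ∈ Finset.range m, ((k+1) + j) := by
      rw [Finset.sum_range_succ', add_zero, add_comm]
      congr 1
      exact Finset.sum_congr rfl fun j _ => by omega
    rw [hS]
    push_cast
    rw [show -δ * ((k : ℝ) + (∑ j ∈ Finset.range m, ((k : ℝ) + 1 + (j : ℝ))))
        = -δ * (k : ℝ) + -δ * (∑ j ∈ Finset.range m, ((k : ℝ) + 1 + (j : ℝ))) by ring,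
      Real.exp_add]
    ring

lemma lemB (β : ZMod N → ℝ) (δ p q : ℝ) :
    ∀ (L : List (ZMod N)) (a : ZMod N) (k : ℕ), 1 ≤ k → k + L.length ≤ N - 1 →
      L.Nodup → (∀ x ∈ L, x ∉ arc a k) →
      contagionLhat β δ (nnRho p q) (arc a k) L ≠ 0 →
      ∃ b, arc a k ∪ L.toFinset = arc b (k + L.length) := by
  intro L
  induction L with
  | nil => intro a k _ _ _ _ _; exact ⟨a, by simp⟩
  | cons j L ih =>
    intro a k h1k hlen hnd hnot hne
    rw [contagionLhat] at hne
    have hj : j ∉ arc a k := hnot j (by simp)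
    have hL0 : contagionL β δ (nnRho p q) (arc a k) j ≠ 0 :=
      fun h => hne (by rw [h, zero_mul])
    have hL1 : contagionLhat β δ (nnRho p q) (insert j (arc a k)) L ≠ 0 :=
      fun h => hne (by rw [h, mul_zero])
    have hlen' : k + 2 ≤ N := by simp only [List.length_cons] at hlen; omega
    rw [contagionL_arc β δ p q a h1k hlen' hj] at hL0
    have hnd' : L.Nodup := (List.nodup_cons.mp hnd).2
    have hjL : j ∉ L := (List.nodup_cons.mp hnd).1
    have hcase : j = a + (k : ZMod N) ∨ j = a - 1 := by
      by_cases h1 : j = a + (k : ZMod N)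
      · exact Or.inl h1
      by_cases h2 : j = a - 1
      · exact Or.inr h2
      rw [if_neg h1, if_neg h2, mul_zero] at hL0
      exact absurd rfl hL0
    rcases hcase with rfl | rfl
    · have hEq : insert (a + (k : ZMod N)) (arc a k) = arc a (k+1) := (arc_succ_right a k).symm
      rw [hEq] at hL1
      obtain ⟨b, hb⟩ := ih a (k+1) (by omega)
        (by simp only [List.length_cons] at hlen ⊢; omega) hnd'
        (by intro x hx
            rw [← hEq, Finset.mem_insert, not_or]
            exact ⟨fun he => hjL (he ▸ hx), hnot x (List.mem_cons_of_mem _ hx)⟩) hL1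
      refine ⟨b, ?_⟩
      rw [List.toFinset_cons, Finset.union_insert, List.length_cons,
        show k + (L.length + 1) = (k+1) + L.length by omega, ← hb,
        arc_succ_right a k, Finset.insert_union]
    · have hEq : insert (a - 1) (arc a k) = arc (a-1) (k+1) := (arc_succ_left a k).symm
      rw [hEq] at hL1
      obtain ⟨b, hb⟩ := ih (a-1) (k+1) (by omega)
        (by simp only [List.length_cons] at hlen ⊢; omega) hnd'
        (by intro x hx
            rw [← hEq, Finset.mem_insert, not_or]
            exact ⟨fun he => hjL (he ▸ hx), hnot x (List.mem_cons_of_mem _ hx)⟩) hL1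
      refine ⟨b, ?_⟩
      rw [List.toFinset_cons, Finset.union_insert, List.length_cons,
        show k + (L.length + 1) = (k+1) + L.length by omega, ← hb,
        arc_succ_left a k, Finset.insert_union]

end Cycle

end NNAux


/-- In the near-neighbor contagion model, for `1 ≤ n < N`:
`∑_{|F|=n} ∑_{π∈Π(F)} 𝓛̂^π(n) = ā₀ e^{−δ n(n−1)/2} (𝔭+𝔮)^{n−1}` where `ā₀ = ∑ᵢ βᵢ`;
moreover `𝓛̂^π(n)` is nonzero only for sets `F` of consecutive elements of the cycle. -/
theorem near_neighbor_total_sum (N : ℕ) [NeZero N] (hN : 2 ≤ N)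
    (p q δ : ℝ) (hp : 0 < p) (hq : 0 < q) (β : ZMod N → ℝ) (hβ : ∀ i, 0 ≤ β i)
    (n : ℕ) (hn : 1 ≤ n) (hnN : n < N) :
    (∑ F ∈ Finset.powersetCard n (Finset.univ : Finset (ZMod N)),
        ((F.toList.permutations).map (fun L => contagionLhat β δ (nnRho p q) ∅ L)).sum)
      = (∑ i, β i) * Real.exp (-δ * ((n * (n - 1) / 2 : ℕ) : ℝ)) * (p + q) ^ (n - 1)
    ∧ ∀ F ∈ Finset.powersetCard n (Finset.univ : Finset (ZMod N)),
        (∃ L ∈ F.toList.permutations, contagionLhat β δ (nnRho p q) ∅ L ≠ 0) →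
        ∃ a : ZMod N, F = (Finset.range n).image (fun k : ℕ => a + (k : ZMod N)) := by
  classical
  haveI : Inhabited (ZMod N) := ⟨0⟩
  obtain ⟨n', rfl⟩ : ∃ n', n = n' + 1 := ⟨n - 1, by omega⟩
  constructor
  · have h1 : ∀ F ∈ powersetCard (n'+1) (univ : Finset (ZMod N)),
        ((F.toList.permutations).map (fun L => contagionLhat β δ (nnRho p q) ∅ L)).sum
          = ∑ i ∈ F, contagionL β δ (nnRho p q) ∅ i *
              NNAux.LhatSum β δ (nnRho p q) (insert i ∅) (F.erase i) := by
      intro F hF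
      rw [NNAux.permsum_eq]
      exact NNAux.LhatSum_rec _ _ _ _ (Finset.card_pos.mp (by
        rw [(Finset.mem_powersetCard.mp hF).2]; omega))
    rw [Finset.sum_congr rfl h1, NNAux.exchange univ n'
      (fun i F' => contagionL β δ (nnRho p q) ∅ i *
        NNAux.LhatSum β δ (nnRho p q) (insert i ∅) F')]
    have e1 : ∀ i : ZMod N, NNAux.arc i 1 = {i} := by
      intro i; simp [NNAux.arc]
    have h2 : ∀ i ∈ (univ : Finset (ZMod N)),
        (∑ F' ∈ powersetCard n' (univ.erase i),
          contagionL β δ (nnRho p q) ∅ i * NNAux.LhatSum β δ (nnRho p q) (insert i ∅) F')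
        = β i * (Real.exp (-δ * ((∑ j ∈ Finset.range n', (1 + j) : ℕ) : ℝ)) * (p+q)^n') := by
      intro i _
      have ei : insert i (∅ : Finset (ZMod N)) = NNAux.arc i 1 := by
        rw [e1 i]; rfl
      have e2 : (univ.erase i : Finset (ZMod N)) = (NNAux.arc i 1)ᶜ := by
        rw [e1 i]; ext x; simp
      have e3 : contagionL β δ (nnRho p q) ∅ i = β i := by simp [contagionL]
      rw [ei, e2, e3, ← Finset.mul_sum,
        NNAux.sumA β δ p q n' i 1 le_rfl (by omega)]
    rw [Finset.sum_congr rfl h2, ← Finset.sum_mul]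
    have hnat : (∑ j ∈ Finset.range n', (1 + j)) = (n'+1) * ((n'+1) - 1) / 2 := by
      have h := Finset.sum_range_id_mul_two (n'+1)
      have h2' : (∑ j ∈ Finset.range (n'+1), j) = ∑ j ∈ Finset.range n', (1+j) := by
        rw [Finset.sum_range_succ', add_zero]
        exact Finset.sum_congr rfl fun j _ => by omega
      omega
    rw [hnat, Nat.add_sub_cancel, mul_assoc]
  · rintro F hF ⟨L, hLperm, hLne⟩
    rw [List.mem_permutations] at hLperm
    have hcard : F.card = n' + 1 := (Finset.mem_powersetCard.mp hF).2
    have hlenL : L.length = n' + 1 := by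
      rw [hLperm.length_eq, Finset.length_toList, hcard]
    have hLnil : L ≠ [] := by intro h; rw [h] at hlenL; simp at hlenL
    obtain ⟨i, L', rfl⟩ := List.exists_cons_of_ne_nil hLnil
    have hnd : (i :: L').Nodup := (hLperm.nodup_iff).mpr F.nodup_toList
    rw [contagionLhat] at hLne
    have hne1 : contagionLhat β δ (nnRho p q) (insert i ∅) L' ≠ 0 :=
      fun h => hLne (by rw [h, mul_zero])
    have e1' : NNAux.arc i 1 = {i} := by simp [NNAux.arc]
    have ei : insert i (∅ : Finset (ZMod N)) = NNAux.arc i 1 := by rw [e1']; rfl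
    rw [ei] at hne1
    have hlen' : L'.length = n' := by simp only [List.length_cons] at hlenL; omega
    obtain ⟨b, hb⟩ := NNAux.lemB β δ p q L' i 1 le_rfl
      (by rw [hlen']; omega) (List.nodup_cons.mp hnd).2
      (by intro x hx
          rw [e1', Finset.mem_singleton]
          exact fun hxi => (List.nodup_cons.mp hnd).1 (hxi ▸ hx)) hne1
    refine ⟨b, ?_⟩
    have hFL : F = (i :: L').toFinset := by
      rw [← Finset.toList_toFinset F]
      exact (List.toFinset_eq_of_perm _ _ hLperm).symm
    rw [hFL]
    calc (i :: L').toFinset = NNAux.arc i 1 ∪ L'.toFinset := by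
          rw [List.toFinset_cons, e1', Finset.insert_eq]
      _ = NNAux.arc b (1 + L'.length) := hb
      _ = (Finset.range (n'+1)).image (fun k : ℕ => b + (k : ZMod N)) := by
          rw [hlen', add_comm]; rfl
end
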